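/- Let A, B be positive definite d×d matrices, M invertible, ε > 0. Then M^{-1} A^{-1} (A M B Mᵀ + (ε²/4)I)^{1/2} A M = (B Mᵀ A M + (ε²/4)I)^{1/2}, where both square roots are defined by conjugation (for the left side by A^{1/2}, for the right side by B^{1/2}); in particular tr((A M B Mᵀ + (ε²/4)I)^{1/2}) = tr((B Mᵀ A M + (ε²/4)I)^{1/2}). -/

import Mathlib

/-!
With `a = A^{1/2}`, `b = B^{1/2}` and `N = a M b`, the two radicands are `N Nᵀ + c` and
`Nᵀ N + c`, and the claim reduces to the intertwining `√(N Nᵀ + c) N = N √(Nᵀ N + c)`.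
For invertible `N` this holds because `N √(Nᵀ N + c) N⁻¹` squares to `N Nᵀ + c`, is symmetric
(`√(Nᵀ N + c)` commutes with `Nᵀ N`), and has the nonnegative spectrum of `√(Nᵀ N + c)`; so it is
the positive square root.
-/

open Matrix

open Classical in
/-- The positive semidefinite square root (zero if not positive semidefinite). -/
noncomputable def psqrt {d : ℕ} (X : Matrix (Fin d) (Fin d) ℝ) : Matrix (Fin d) (Fin d) ℝ :=
  if h : X.PosSemidef then
    h.1.eigenvectorUnitary.1 * diagonal ((↑) ∘ (√·) ∘ h.1.eigenvalues) *
      (star h.1.eigenvectorUnitary : Matrix (Fin d) (Fin d) ℝ)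
  else 0

open scoped MatrixOrder ComplexOrder

theorem psqrt_eq_sqrt {d : ℕ} (X : Matrix (Fin d) (Fin d) ℝ) : psqrt X = CFC.sqrt X := by
  unfold psqrt
  split_ifs with h
  · rw [CFC.sqrt_eq_cfc, cfc_nnreal_eq_real _ X, h.1.cfc_eq]
    simp only [IsHermitian.cfc, Unitary.conjStarAlgAut_apply]
    congr 3
    funext i
    simp [Real.coe_sqrt, max_eq_left (h.eigenvalues_nonneg i)]
  · exact (CFC.sqrt_of_not_nonneg (mt LE.le.posSemidef h)).symm

namespace Matrix

variable {n 𝕜 : Type*} [Fintype n] [DecidableEq n] [RCLike 𝕜]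

theorem sqrt_conj_of_isSelfAdjoint {X P : Matrix n n 𝕜} (hP : IsUnit P) (hX : 0 ≤ X)
    (h : IsSelfAdjoint (P * CFC.sqrt X * P⁻¹)) :
    CFC.sqrt (P * X * P⁻¹) = P * CFC.sqrt X * P⁻¹ := by
  refine CFC.sqrt_unique ?_ ?_
  · calc P * CFC.sqrt X * P⁻¹ * (P * CFC.sqrt X * P⁻¹)
        = P * (CFC.sqrt X * (P⁻¹ * P) * CFC.sqrt X) * P⁻¹ := by simp only [mul_assoc]
      _ = P * X * P⁻¹ := by
        rw [nonsing_inv_mul P ((isUnit_iff_isUnit_det P).mp hP), mul_one,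
          CFC.sqrt_mul_sqrt_self X]
  · have hspec : spectrum ℝ (P * CFC.sqrt X * P⁻¹) = spectrum ℝ (CFC.sqrt X) := by
      have h := spectrum.units_conjugate (R := ℝ) (a := CFC.sqrt X) (u := hP.unit)
      rwa [coe_units_inv, IsUnit.unit_spec] at h
    rw [StarOrderedRing.nonneg_iff_spectrum_nonneg (R := ℝ) _ h, hspec]
    exact fun x hx => spectrum_nonneg_of_nonneg (CFC.sqrt_nonneg X) hx

theorem sqrt_mul_conjTranspose_add_smul_one_mul {N : Matrix n n 𝕜} (hN : IsUnit N) {c : ℝ}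
    (hc : 0 ≤ c) :
    CFC.sqrt (N * Nᴴ + c • 1) * N = N * CFC.sqrt (Nᴴ * N + c • 1) := by
  set G := Nᴴ * N
  set s := CFC.sqrt (G + c • 1)
  have hX : 0 ≤ G + c • 1 :=
    ((posSemidef_conjTranspose_mul_self N).add (PosSemidef.one.smul hc)).nonneg
  have hG : IsUnit G := hN.star.mul hN
  have hsG : Commute s G := by
    have hG_eq : G = s * s - c • 1 := by rw [CFC.sqrt_mul_sqrt_self _ hX, add_sub_cancel_right]
    rw [hG_eq]
    exact ((Commute.refl s).mul_right (Commute.refl s)).sub_right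
      ((Commute.one_right s).smul_right c)
  have hsGinv : Commute s G⁻¹ := by
    simpa [coe_units_inv] using hsG.units_inv_right (u := hG.unit)
  have hN_inv : N⁻¹ = G⁻¹ * Nᴴ := by
    refine inv_eq_left_inv ?_
    rw [mul_assoc, nonsing_inv_mul G ((isUnit_iff_isUnit_det G).mp hG)]
  have hconj : N * (G + c • 1) * N⁻¹ = N * Nᴴ + c • 1 := by
    have := mul_nonsing_inv N ((isUnit_iff_isUnit_det N).mp hN)
    simp only [G, mul_add, add_mul, mul_smul_comm, smul_mul_assoc, mul_one, mul_assoc, this]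
  -- `N s N⁻¹ = N (s G⁻¹) Nᴴ`, and `s G⁻¹` is self-adjoint as a product of commuting ones.
  have hself : IsSelfAdjoint (N * s * N⁻¹) := by
    have hsGinv_self : IsSelfAdjoint (s * G⁻¹) :=
      ((CFC.sqrt_nonneg _).isSelfAdjoint.commute_iff
        (isHermitian_conjTranspose_mul_self N).inv).mp hsGinv
    rw [hN_inv]
    simpa [mul_assoc, star_eq_conjTranspose] using hsGinv_self.conjugate N
  rw [← hconj, sqrt_conj_of_isSelfAdjoint hN hX hself, mul_assoc,
    nonsing_inv_mul _ ((isUnit_iff_isUnit_det N).mp hN), mul_one]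

theorem transpose_sqrt (X : Matrix n n ℝ) : (CFC.sqrt X)ᵀ = CFC.sqrt X := by
  rw [← conjTranspose_eq_transpose_of_trivial]
  exact (CFC.sqrt_nonneg X).isSelfAdjoint

end Matrix

theorem stmt13_general {d : ℕ} (A B M : Matrix (Fin d) (Fin d) ℝ) (hA : A.PosDef) (hB : B.PosDef)
    (hM : IsUnit M.det) (ε : ℝ)
    (K K' : Matrix (Fin d) (Fin d) ℝ)
    (hK : K = psqrt A * psqrt (psqrt A * (M * B * Mᵀ) * psqrt A + (ε ^ 2 / 4) • 1) *
          (psqrt A)⁻¹)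
    (hK' : K' = psqrt B * psqrt (psqrt B * (Mᵀ * A * M) * psqrt B + (ε ^ 2 / 4) • 1) *
          (psqrt B)⁻¹) :
    M⁻¹ * A⁻¹ * K * A * M = K' ∧ K.trace = K'.trace := by
  simp only [psqrt_eq_sqrt] at hK hK'
  set a := CFC.sqrt A
  set b := CFC.sqrt B
  have ha : IsUnit a := (CFC.isUnit_sqrt_iff A hA.posSemidef.nonneg).mpr hA.isUnit
  have hb : IsUnit b := (CFC.isUnit_sqrt_iff B hB.posSemidef.nonneg).mpr hB.isUnit
  have haa : a * a = A := CFC.sqrt_mul_sqrt_self A hA.posSemidef.nonneg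
  have hbb : b * b = B := CFC.sqrt_mul_sqrt_self B hB.posSemidef.nonneg
  set N := a * M * b
  have hN : IsUnit N := (ha.mul ((isUnit_iff_isUnit_det M).mpr hM)).mul hb
  have hNT : Nᵀ = b * Mᵀ * a := by simp [N, a, b, transpose_sqrt, mul_assoc]
  rw [show a * (M * B * Mᵀ) * a = N * Nᵀ by rw [hNT]; simp only [N, ← hbb, mul_assoc]] at hK
  rw [show b * (Mᵀ * A * M) * b = Nᵀ * N by rw [hNT]; simp only [N, ← haa, mul_assoc]] at hK'
  have hkey := sqrt_mul_conjTranspose_add_smul_one_mul hN (c := ε ^ 2 / 4) (by positivity)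
  rw [conjTranspose_eq_transpose_of_trivial] at hkey
  let _ := ha.invertible
  let _ := hb.invertible
  let _ := hN.invertible
  have hAM : A * M = a * N * b⁻¹ := by simp [N, ← haa, mul_assoc]
  have hconj : M⁻¹ * A⁻¹ * K * A * M = (A * M)⁻¹ * K * (A * M) := by
    rw [Matrix.mul_inv_rev, mul_assoc _ A M]
  have hmain : (A * M)⁻¹ * K * (A * M) = K' := by
    rw [hK, hK', hAM]
    simp only [Matrix.mul_inv_rev, inv_inv_of_invertible, mul_assoc,
      inv_mul_cancel_left_of_invertible]
    rw [← mul_assoc (CFC.sqrt _) N, hkey]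
    simp [mul_assoc]
  rw [hconj, ← hmain, trace_conj' (hA.isUnit.mul ((isUnit_iff_isUnit_det M).mpr hM))]
  exact ⟨rfl, rfl⟩

theorem stmt13 {d : ℕ} (A B M : Matrix (Fin d) (Fin d) ℝ) (hA : A.PosDef) (hB : B.PosDef)
    (hM : IsUnit M.det) (ε : ℝ) (hε : 0 < ε)
    (K K' : Matrix (Fin d) (Fin d) ℝ)
    (hK : K = psqrt A * psqrt (psqrt A * (M * B * Mᵀ) * psqrt A + (ε ^ 2 / 4) • 1) *
          (psqrt A)⁻¹)
    (hK' : K' = psqrt B * psqrt (psqrt B * (Mᵀ * A * M) * psqrt B + (ε ^ 2 / 4) • 1) *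
          (psqrt B)⁻¹) :
    M⁻¹ * A⁻¹ * K * A * M = K' ∧ K.trace = K'.trace :=
  stmt13_general A B M hA hB hM ε K K' hK hK'
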